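/- arXiv:1801.04665 — 4 statements merged into one kernel-verified Lean document; each statement's English description precedes it below -/
import Mathlib

section
/- Let Ω ≥ 0, c = √(1+Ω²) − Ω, and β = (3c⁴ + 8c² − 1)/(6(c²+1)²). Then β > 0 if and only if Ω < √((1 + 2√19)/6). -/
theorem stmt_2 (Ω c β : ℝ) (hΩ : 0 ≤ Ω) (hc : c = Real.sqrt (1 + Ω ^ 2) - Ω)
    (hβ : β = (3 * c ^ 4 + 8 * c ^ 2 - 1) / (6 * (c ^ 2 + 1) ^ 2)) :
    0 < β ↔ Ω < Real.sqrt ((1 + 2 * Real.sqrt 19) / 6) := by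
  have hΩ2 : (0:ℝ) ≤ 1 + Ω ^ 2 := by positivity
  have hs : Real.sqrt (1 + Ω ^ 2) ^ 2 = 1 + Ω ^ 2 := Real.sq_sqrt hΩ2
  have hsnn : 0 ≤ Real.sqrt (1 + Ω ^ 2) := Real.sqrt_nonneg _
  have hslt : Ω < Real.sqrt (1 + Ω ^ 2) := by nlinarith
  have hcpos : 0 < c := by rw [hc]; linarith
  have hrel : c ^ 2 + 2 * Ω * c = 1 := by rw [hc]; nlinarith
  have hcle : c ≤ 1 := by nlinarith
  have hr : Real.sqrt 19 ^ 2 = 19 := Real.sq_sqrt (by norm_num)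
  have hrpos : (0:ℝ) < Real.sqrt 19 := Real.sqrt_pos.mpr (by norm_num)
  set r := Real.sqrt 19 with hrdef
  have hden : 0 < 6 * (c ^ 2 + 1) ^ 2 := by positivity
  have hΩc : 2 * Ω * c = 1 - c ^ 2 := by linarith
  have hΩsq : 4 * Ω ^ 2 * c ^ 2 = (1 - c ^ 2) ^ 2 := by nlinarith
  rw [hβ, Real.lt_sqrt hΩ]
  constructor
  · intro h
    have hnum : 0 < 3 * c ^ 4 + 8 * c ^ 2 - 1 := by
      by_contra hn
      push_neg at hn
      have : (3 * c ^ 4 + 8 * c ^ 2 - 1) / (6 * (c ^ 2 + 1) ^ 2) ≤ 0 :=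
        div_nonpos_of_nonpos_of_nonneg hn (le_of_lt hden)
      linarith
    -- c^2 > (r-4)/3 : since (3c^2+4)^2 > 19 and both sides positive
    have h1 : 0 < 3 * c ^ 2 - (r - 4) := by nlinarith
    have h2 : 0 < 4 + r - c ^ 2 := by nlinarith
    have hkey : 3 * (1 - c ^ 2) ^ 2 < (1 + 2 * r) * (2 * c ^ 2) := by nlinarith [mul_pos h1 h2]
    -- Ω^2 = (1-c^2)^2/(4c^2)
    have hc2 : 0 < c ^ 2 := by positivity
    nlinarith [hkey, hΩsq, hc2]
  · intro h
    have hkey : 3 * (1 - c ^ 2) ^ 2 < (1 + 2 * r) * (2 * c ^ 2) := by nlinarith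
    have h2 : 0 < 4 + r - c ^ 2 := by nlinarith
    have h1 : 0 < 3 * c ^ 2 - (r - 4) := by
      by_contra hn
      push_neg at hn
      have e : ((r - 4) - 3 * c ^ 2) * (4 + r - c ^ 2)
          = 3 * c ^ 4 - (4 * r + 8) * c ^ 2 + 3 := by linear_combination hr
      have hge := mul_nonneg (by linarith : (0:ℝ) ≤ (r - 4) - 3 * c ^ 2) (le_of_lt h2)
      rw [e] at hge
      linarith
    have hprod : (3 * c ^ 2 - (r - 4)) * (3 * c ^ 2 + 4 + r) = 9 * c ^ 4 + 24 * c ^ 2 - 3 := by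
      linear_combination -hr
    have hp := mul_pos h1 (show (0:ℝ) < 3 * c ^ 2 + 4 + r by positivity)
    rw [hprod] at hp
    have hnum : 0 < 3 * c ^ 4 + 8 * c ^ 2 - 1 := by linarith
    exact div_pos hnum hden
end

section
/- Let c = √(1+Ω²) − Ω with Ω ≥ 0, and define z₀² = 1/2 − (2/3)·1/(c²+1) + (4/3)·1/(c²+1)². If 0 ≤ Ω < √((1+2√19)/6), then 1/√2 ≤ z₀ < √((61 − 2√19)/54). -/
set_option maxHeartbeats 1000000 in
theorem stmt_3 (Ω c z₀ : ℝ) (hΩ : 0 ≤ Ω) (hc : c = Real.sqrt (1 + Ω ^ 2) - Ω)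
    (hz₀ : 0 ≤ z₀)
    (hz : z₀ ^ 2 = 1 / 2 - (2 / 3) * (1 / (c ^ 2 + 1)) + (4 / 3) * (1 / (c ^ 2 + 1) ^ 2))
    (hΩ' : Ω < Real.sqrt ((1 + 2 * Real.sqrt 19) / 6)) :
    1 / Real.sqrt 2 ≤ z₀ ∧ z₀ < Real.sqrt ((61 - 2 * Real.sqrt 19) / 54) := by
  set K := Real.sqrt 19 with hKdef
  have hK2 : K ^ 2 = 19 := Real.sq_sqrt (by norm_num)
  have hK4 : 4 < K := by
    rw [hKdef, show (4:ℝ) = Real.sqrt 16 by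
      rw [show (16:ℝ) = 4^2 by norm_num, Real.sqrt_sq (by norm_num)]]
    exact Real.sqrt_lt_sqrt (by norm_num) (by norm_num)
  have hK5 : K < 5 := by
    nlinarith [hK2, Real.sqrt_nonneg 19]
  have hr : Real.sqrt (1 + Ω ^ 2) ^ 2 = 1 + Ω ^ 2 := Real.sq_sqrt (by positivity)
  -- c > 0
  have hcpos : 0 < c := by
    rw [hc, sub_pos]
    rw [show Real.sqrt (1 + Ω^2) = Real.sqrt (1 + Ω^2) from rfl]
    nlinarith [hr, Real.sqrt_nonneg (1 + Ω^2)]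
  -- c ≤ 1
  have hcle : c ≤ 1 := by
    have h1 : Real.sqrt (1 + Ω ^ 2) ≤ 1 + Ω := by
      rw [show (1:ℝ) + Ω = Real.sqrt ((1+Ω)^2) from (Real.sqrt_sq (by linarith)).symm]
      exact Real.sqrt_le_sqrt (by nlinarith)
    rw [hc]; linarith
  -- key identity c² + 2cΩ = 1
  have hid : c ^ 2 + 2 * c * Ω = 1 := by
    have : c + Ω = Real.sqrt (1 + Ω ^ 2) := by rw [hc]; ring
    nlinarith [hr, this]
  -- Ω² < (1 + 2K)/6
  have hΩ2 : Ω ^ 2 < (1 + 2 * K) / 6 := by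
    have h6 : (0:ℝ) ≤ (1 + 2 * K) / 6 := by positivity
    have := (Real.lt_sqrt hΩ).mp hΩ'
    linarith
  -- 6(1-c²)² < 4c²(1+2K)
  have hmain : 6 * (1 - c ^ 2) ^ 2 < 4 * c ^ 2 * (1 + 2 * K) := by
    have h1 : (1 - c ^ 2) ^ 2 = 4 * c ^ 2 * Ω ^ 2 := by nlinarith [hid]
    have h2 := mul_lt_mul_of_pos_left hΩ2 (show (0:ℝ) < 24 * c ^ 2 by positivity)
    nlinarith [h1, h2]
  -- hence 3c² + 4 > K
  have hkey : K < 3 * c ^ 2 + 4 := by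
    by_contra h
    push_neg at h
    have h2 : 2 * c ^ 2 - 8 - 2 * K ≤ 0 := by nlinarith [sq_nonneg c]
    have hp : 0 ≤ (K - (3 * c ^ 2 + 4)) * (8 + 2 * K - 2 * c ^ 2) :=
      mul_nonneg (by linarith) (by linarith)
    nlinarith [hp, hmain, hK2]
  set s : ℝ := c ^ 2 + 1 with hsdef
  have hs1 : 1 < s := by nlinarith [hcpos]
  have hs2 : s ≤ 2 := by nlinarith [hcle, hcpos]
  have hspos : (0:ℝ) < s := by linarith
  have hzs : z₀ ^ 2 * (54 * s ^ 2) = 27 * s ^ 2 - 36 * s + 72 := by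
    rw [hz]
    field_simp
    ring
  constructor
  · -- lower bound: z₀² ≥ 1/2
    have hlow : 1 / 2 ≤ z₀ ^ 2 := by
      have hq : 0 ≤ (2 - s) * (2 * s) := by nlinarith
      nlinarith [hzs, sq_nonneg s, hspos]
    have h12 : Real.sqrt (1/2) ≤ Real.sqrt (z₀ ^ 2) := Real.sqrt_le_sqrt hlow
    rw [Real.sqrt_sq hz₀] at h12
    calc 1 / Real.sqrt 2 = Real.sqrt (1/2) := by
          rw [one_div, one_div, ← Real.sqrt_inv]
      _ ≤ z₀ := h12
  · -- upper bound
    have hsK : K - 1 < 3 * s := by nlinarith [hkey]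
    have hq : 0 < (34 - 2*K) * s ^ 2 + 36 * s - 72 := by
      have hf1 : 0 < 3 * s - K + 1 := by linarith
      have hf2 : 0 < (34 - 2*K) * s + 12 + 12*K := by nlinarith
      nlinarith [mul_pos hf1 hf2, hK2]
    have hup : z₀ ^ 2 < (61 - 2 * K) / 54 := by
      rw [lt_div_iff₀ (by norm_num : (0:ℝ) < 54)]
      nlinarith [hzs, hq, mul_pos hspos hspos]
    have hT : z₀ < Real.sqrt ((61 - 2 * K) / 54) := by
      exact (Real.lt_sqrt hz₀).mpr hup
    exact hT
end

section
/- Let M, N : [0,T) → ℝ be C¹ functions and C₀ ≥ 0 a constant such that M'(t) ≥ −(1/2)M(t)N(t) − C₀² and N'(t) ≤ (1/2)M(t)N(t) + C₀² for all t ∈ [0,T). Assume M(0) > 0, N(0) < 0, and (1/2)M(0)N(0) + C₀² < 0. Then M(t) > M(0) > 0 and N(t) < N(0) < 0 for all t ∈ [0,T), and moreover M'(t) > 0 and N'(t) < 0 on [0,T). -/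
theorem stmt_13 (T C₀ : ℝ) (hT : 0 < T) (hC₀ : 0 ≤ C₀) (M N : ℝ → ℝ)
    (hM : ContDiff ℝ 1 M) (hN : ContDiff ℝ 1 N)
    (hM' : ∀ t ∈ Set.Ico (0 : ℝ) T, deriv M t ≥ -(1 / 2) * M t * N t - C₀ ^ 2)
    (hN' : ∀ t ∈ Set.Ico (0 : ℝ) T, deriv N t ≤ (1 / 2) * M t * N t + C₀ ^ 2)
    (hM0 : M 0 > 0) (hN0 : N 0 < 0) (h0 : (1 / 2) * M 0 * N 0 + C₀ ^ 2 < 0) :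
    (∀ t ∈ Set.Ioo (0 : ℝ) T, M t > M 0 ∧ N t < N 0) ∧
    (∀ t ∈ Set.Ico (0 : ℝ) T, M t > 0 ∧ N t < 0) ∧
    (∀ t ∈ Set.Ico (0 : ℝ) T, deriv M t > 0 ∧ deriv N t < 0) := by
  have hMc : Continuous M := hM.continuous
  have hNc : Continuous N := hN.continuous
  have hMd : Continuous (deriv M) := hM.continuous_deriv le_rfl
  have hNd : Continuous (deriv N) := hN.continuous_deriv le_rfl
  -- key pointwise lemma
  have key : ∀ t, t ∈ Set.Ico (0:ℝ) T → M 0 ≤ M t → N t ≤ N 0 →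
      0 < deriv M t ∧ deriv N t < 0 := by
    intro t ht h1 h2
    have hmn : M t * N t ≤ M 0 * N 0 := by nlinarith
    constructor
    · have := hM' t ht; nlinarith
    · have := hN' t ht; nlinarith
  -- the invariance claim
  have inv : ∀ t ∈ Set.Ico (0:ℝ) T, M 0 ≤ M t ∧ N t ≤ N 0 := by
    by_contra hcon
    push_neg at hcon
    obtain ⟨t₀, ht₀, hbad⟩ := hcon
    set B := {t : ℝ | t ∈ Set.Icc 0 t₀ ∧
        ∀ s ∈ Set.Icc (0:ℝ) t, M 0 ≤ M s ∧ N s ≤ N 0} with hBdef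
    have h0B : (0:ℝ) ∈ B := by
      refine ⟨⟨le_refl _, ht₀.1⟩, ?_⟩
      intro s hs
      have : s = 0 := le_antisymm hs.2 hs.1
      simp [this]
    have hBne : B.Nonempty := ⟨0, h0B⟩
    have hBbdd : BddAbove B := ⟨t₀, fun t ht => ht.1.2⟩
    set t' := sSup B with ht'def
    have ht'0 : 0 ≤ t' := le_csSup hBbdd h0B
    have ht't₀ : t' ≤ t₀ := csSup_le hBne fun t ht => ht.1.2
    -- the property holds on [0, t')
    have hPlt : ∀ s, 0 ≤ s → s < t' → M 0 ≤ M s ∧ N s ≤ N 0 := by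
      intro s hs0 hst
      obtain ⟨t, htB, hlt⟩ := exists_lt_of_lt_csSup hBne hst
      exact htB.2 s ⟨hs0, hlt.le⟩
    -- the property holds at t'
    have hPt' : M 0 ≤ M t' ∧ N t' ≤ N 0 := by
      rcases eq_or_lt_of_le ht'0 with h | h
      · simp [← h]
      · have hIoo : Set.Ioo (0:ℝ) t' ∈ nhdsWithin t' (Set.Iio t') :=
          Ioo_mem_nhdsLT_of_mem ⟨h, le_refl _⟩
        constructor
        · refine ge_of_tendsto
            ((hMc.tendsto t').mono_left nhdsWithin_le_nhds :
              Filter.Tendsto M (nhdsWithin t' (Set.Iio t')) _) ?_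
          filter_upwards [hIoo] with s hs
          exact (hPlt s hs.1.le hs.2).1
        · refine le_of_tendsto
            ((hNc.tendsto t').mono_left nhdsWithin_le_nhds :
              Filter.Tendsto N (nhdsWithin t' (Set.Iio t')) _) ?_
          filter_upwards [hIoo] with s hs
          exact (hPlt s hs.1.le hs.2).2
    have hPle : ∀ s, 0 ≤ s → s ≤ t' → M 0 ≤ M s ∧ N s ≤ N 0 := by
      intro s hs0 hst
      rcases lt_or_eq_of_le hst with h | h
      · exact hPlt s hs0 h
      · rw [h]; exact hPt'
    -- t' < t₀: otherwise contradiction with hbad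
    have ht'lt : t' < t₀ := by
      rcases lt_or_eq_of_le ht't₀ with h | h
      · exact h
      · exfalso
        rw [h] at hPt'
        exact absurd hPt'.2 (not_le.mpr (hbad hPt'.1))
    -- derivatives have the right signs on [0, t']
    have hdsign : ∀ s, 0 ≤ s → s ≤ t' → 0 < deriv M s ∧ deriv N s < 0 := by
      intro s hs0 hst
      have hsT : s ∈ Set.Ico (0:ℝ) T := ⟨hs0, lt_of_le_of_lt (hst.trans ht't₀) ht₀.2⟩
      obtain ⟨h1, h2⟩ := hPle s hs0 hst
      exact key s hsT h1 h2
    -- extend beyond t' using continuity of the derivatives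
    have hev : ∀ᶠ s in nhds t', 0 < deriv M s ∧ deriv N s < 0 := by
      refine Filter.Eventually.and ?_ ?_
      · exact (hMd.tendsto t').eventually (eventually_gt_nhds (hdsign t' ht'0 le_rfl).1)
      · exact (hNd.tendsto t').eventually (eventually_lt_nhds (hdsign t' ht'0 le_rfl).2)
    obtain ⟨ε, hε, hball⟩ := Metric.eventually_nhds_iff.mp hev
    set u := min (t' + ε / 2) t₀ with hudef
    have hut' : t' < u := lt_min (by linarith) ht'lt
    have hut₀ : u ≤ t₀ := min_le_right _ _
    have hu0 : 0 ≤ u := ht'0.trans hut'.le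
    -- derivative signs on interior (0, u)
    have hdu : ∀ x ∈ Set.Ioo (0:ℝ) u, 0 < deriv M x ∧ deriv N x < 0 := by
      intro x hx
      rcases le_or_gt x t' with h | h
      · exact hdsign x hx.1.le h
      · refine hball ?_
        have hxu : x < t' + ε / 2 := lt_of_lt_of_le hx.2 (min_le_left _ _)
        rw [Real.dist_eq, abs_lt]
        constructor <;> linarith
    have hMmono : StrictMonoOn M (Set.Icc 0 u) := by
      refine strictMonoOn_of_deriv_pos (convex_Icc 0 u) hMc.continuousOn ?_
      intro x hx
      rw [interior_Icc] at hx
      exact (hdu x hx).1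
    have hNanti : StrictAntiOn N (Set.Icc 0 u) := by
      refine strictAntiOn_of_deriv_neg (convex_Icc 0 u) hNc.continuousOn ?_
      intro x hx
      rw [interior_Icc] at hx
      exact (hdu x hx).2
    -- hence u ∈ B, contradicting the sup
    have huB : u ∈ B := by
      refine ⟨⟨hu0, hut₀⟩, ?_⟩
      intro s hs
      rcases eq_or_lt_of_le hs.1 with h | h
      · simp [← h]
      · constructor
        · exact le_of_lt (hMmono ⟨le_refl _, hu0⟩ ⟨hs.1, hs.2⟩ h)
        · exact le_of_lt (hNanti ⟨le_refl _, hu0⟩ ⟨hs.1, hs.2⟩ h)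
    have : u ≤ t' := le_csSup hBbdd huB
    linarith
  -- now conclude
  refine ⟨?_, ?_, ?_⟩
  · intro t ht
    have hderiv : ∀ x ∈ Set.Ioo (0:ℝ) t, 0 < deriv M x ∧ deriv N x < 0 := by
      intro x hx
      have hxT : x ∈ Set.Ico (0:ℝ) T := ⟨hx.1.le, hx.2.trans ht.2⟩
      obtain ⟨h1, h2⟩ := inv x hxT
      exact key x hxT h1 h2
    have hMmono : StrictMonoOn M (Set.Icc 0 t) := by
      refine strictMonoOn_of_deriv_pos (convex_Icc 0 t) hMc.continuousOn ?_
      intro x hx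
      rw [interior_Icc] at hx
      exact (hderiv x hx).1
    have hNanti : StrictAntiOn N (Set.Icc 0 t) := by
      refine strictAntiOn_of_deriv_neg (convex_Icc 0 t) hNc.continuousOn ?_
      intro x hx
      rw [interior_Icc] at hx
      exact (hderiv x hx).2
    exact ⟨hMmono ⟨le_refl _, ht.1.le⟩ ⟨ht.1.le, le_refl _⟩ ht.1,
      hNanti ⟨le_refl _, ht.1.le⟩ ⟨ht.1.le, le_refl _⟩ ht.1⟩
  · intro t ht
    obtain ⟨h1, h2⟩ := inv t ht
    exact ⟨lt_of_lt_of_le hM0 h1, lt_of_le_of_lt h2 hN0⟩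
  · intro t ht
    obtain ⟨h1, h2⟩ := inv t ht
    exact key t ht h1 h2
end

section
/- Let M, N : [0,T) → ℝ be C¹ with M(t) > 0 > N(t) on [0,T), satisfying M' ≥ −(1/2)MN − C₀² and N' ≤ (1/2)MN + C₀² for some C₀ ≥ 0, and suppose h(t) := √(−M(t)N(t)) satisfies h(0) > √2·C₀. Then h'(t) ≥ (1/2)(h(t) − √2·C₀)(h(t) + √2·C₀) ≥ (1/2)(h(t) − √2·C₀)² for all t where these quantities are defined, using the elementary inequality (M − N)/(2√(−MN)) ≥ 1. -/
/-!
By AM-GM, `M - N ≥ 2√(-MN) = 2h`, so the Riccati-type bounds on `M'` and `N'` give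
`h' = (M'(-N) + M(-N')) / (2h) ≥ (h²/2 - C₀²)(M - N) / (2h) ≥ (h² - 2C₀²)/2` as long as
`h ≥ √2 C₀`. Hence `h` cannot decrease while it is above `√2 C₀`, and since it starts above,
it stays above on all of `[0, T)`.
-/

open Set

theorem two_sqrt_neg_mul_le_sub {m n : ℝ} (hm : 0 ≤ m) (hn : n ≤ 0) :
    2 * √(-(m * n)) ≤ m - n := by
  have hs : √(-(m * n)) ^ 2 = -(m * n) := Real.sq_sqrt (by nlinarith)
  nlinarith [sq_nonneg (m + n), sq_nonneg (m - n - 2 * √(-(m * n))), Real.sqrt_nonneg (-(m * n))]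

/-- At the first time `t₀` with `f t₀ ≤ a`, `f` would be monotone on `[x₀, t₀]`. -/
theorem lt_of_deriv_nonneg_of_lt {f : ℝ → ℝ} {a x₀ x : ℝ} (hx : x₀ ≤ x)
    (hf : ContinuousOn f (Icc x₀ x)) (hdiff : DifferentiableOn ℝ f (Ioo x₀ x))
    (hderiv : ∀ t ∈ Ioo x₀ x, a < f t → 0 ≤ deriv f t) (h₀ : a < f x₀) : a < f x := by
  by_contra! hfx
  set B := Icc x₀ x ∩ f ⁻¹' Iic a
  have hB : IsClosed B := hf.preimage_isClosed_of_isClosed isClosed_Icc isClosed_Iic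
  have hBbdd : BddBelow B := ⟨x₀, fun t ht => ht.1.1⟩
  obtain ⟨⟨hx₀t₀, ht₀x⟩, ht₀a⟩ : sInf B ∈ B := hB.csInf_mem ⟨x, ⟨hx, le_rfl⟩, hfx⟩ hBbdd
  have habove : ∀ t ∈ Ico x₀ (sInf B), a < f t := fun t ht => by
    by_contra! hft
    exact ht.2.not_ge (csInf_le hBbdd ⟨⟨ht.1, ht.2.le.trans ht₀x⟩, hft⟩)
  have hsub : Ioo x₀ (sInf B) ⊆ Ioo x₀ x := Ioo_subset_Ioo_right ht₀x
  have hmono : MonotoneOn f (Icc x₀ (sInf B)) := by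
    refine monotoneOn_of_deriv_nonneg (convex_Icc _ _) (hf.mono (Icc_subset_Icc_right ht₀x)) ?_ ?_
    · rw [interior_Icc]
      exact hdiff.mono hsub
    · rw [interior_Icc]
      exact fun t ht => hderiv t (hsub ht) (habove t (Ioo_subset_Ico_self ht))
  exact h₀.not_ge ((hmono ⟨le_rfl, hx₀t₀⟩ ⟨hx₀t₀, le_rfl⟩ hx₀t₀).trans ht₀a)

section SqrtNegMul

variable {M N : ℝ → ℝ} {t : ℝ}

theorem hasDerivAt_sqrt_neg_mul (hM : DifferentiableAt ℝ M t) (hN : DifferentiableAt ℝ N t)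
    (hMN : M t * N t < 0) :
    HasDerivAt (fun s => √(-(M s * N s)))
      (-(deriv M t * N t + M t * deriv N t) / (2 * √(-(M t * N t)))) t :=
  (hM.hasDerivAt.mul hN.hasDerivAt).neg.sqrt (neg_pos.2 hMN).ne'

theorem deriv_sqrt_neg_mul_ge {c : ℝ} (hM : DifferentiableAt ℝ M t)
    (hN : DifferentiableAt ℝ N t) (hMt : 0 < M t) (hNt : N t < 0)
    (hM' : deriv M t ≥ -(1 / 2) * M t * N t - c ^ 2)
    (hN' : deriv N t ≤ (1 / 2) * M t * N t + c ^ 2) (hc : 0 ≤ c)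
    (hca : √2 * c ≤ √(-(M t * N t))) :
    deriv (fun s => √(-(M s * N s))) t ≥
      (1 / 2) * (√(-(M t * N t)) - √2 * c) * (√(-(M t * N t)) + √2 * c) := by
  set h := √(-(M t * N t))
  have hMN : M t * N t < 0 := mul_neg_of_pos_of_neg hMt hNt
  have hh : 0 < h := Real.sqrt_pos.2 (neg_pos.2 hMN)
  have hh2 : h ^ 2 = -(M t * N t) := Real.sq_sqrt (neg_pos.2 hMN).le
  have hc2 : (√2 * c) ^ 2 = 2 * c ^ 2 := by rw [mul_pow, Real.sq_sqrt zero_le_two]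
  have hgap : 0 ≤ -(1 / 2) * M t * N t - c ^ 2 := by
    nlinarith [pow_le_pow_left₀ (by positivity) hca 2]
  rw [(hasDerivAt_sqrt_neg_mul hM hN hMN).deriv, ge_iff_le, le_div_iff₀ (by positivity)]
  calc 1 / 2 * (h - √2 * c) * (h + √2 * c) * (2 * h)
      = (-(1 / 2) * M t * N t - c ^ 2) * (2 * h) := by linear_combination h * hh2 - h * hc2
    _ ≤ (-(1 / 2) * M t * N t - c ^ 2) * (M t - N t) :=
        mul_le_mul_of_nonneg_left (two_sqrt_neg_mul_le_sub hMt.le hNt.le) hgap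
    _ ≤ deriv M t * -N t + M t * -deriv N t := by
        nlinarith [mul_le_mul_of_nonneg_left hM' (neg_nonneg.2 hNt.le),
          mul_le_mul_of_nonneg_left hN' hMt.le]
    _ = -(deriv M t * N t + M t * deriv N t) := by ring

end SqrtNegMul

theorem stmt_15_general (T C₀ : ℝ) (hC₀ : 0 ≤ C₀) (M N : ℝ → ℝ)
    (hM : ContDiff ℝ 1 M) (hN : ContDiff ℝ 1 N)
    (hMN : ∀ t ∈ Set.Ico (0 : ℝ) T, M t > 0 ∧ N t < 0)
    (hM' : ∀ t ∈ Set.Ico (0 : ℝ) T, deriv M t ≥ -(1 / 2) * M t * N t - C₀ ^ 2)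
    (hN' : ∀ t ∈ Set.Ico (0 : ℝ) T, deriv N t ≤ (1 / 2) * M t * N t + C₀ ^ 2)
    (h0 : Real.sqrt (-(M 0 * N 0)) > Real.sqrt 2 * C₀) :
    ∀ t ∈ Set.Ico (0 : ℝ) T,
      deriv (fun s => Real.sqrt (-(M s * N s))) t ≥
        (1 / 2) * (Real.sqrt (-(M t * N t)) - Real.sqrt 2 * C₀) *
          (Real.sqrt (-(M t * N t)) + Real.sqrt 2 * C₀) ∧
      (1 / 2) * (Real.sqrt (-(M t * N t)) - Real.sqrt 2 * C₀) *
          (Real.sqrt (-(M t * N t)) + Real.sqrt 2 * C₀) ≥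
        (1 / 2) * (Real.sqrt (-(M t * N t)) - Real.sqrt 2 * C₀) ^ 2 := by
  set h := fun s => √(-(M s * N s))
  have ha : 0 ≤ √2 * C₀ := by positivity
  have hMd := hM.differentiable one_ne_zero
  have hNd := hN.differentiable one_ne_zero
  have hriccati : ∀ t ∈ Ico 0 T, √2 * C₀ ≤ h t →
      deriv h t ≥ (1 / 2) * (h t - √2 * C₀) * (h t + √2 * C₀) := fun t ht =>
    deriv_sqrt_neg_mul_ge (hMd t) (hNd t) (hMN t ht).1 (hMN t ht).2 (hM' t ht) (hN' t ht) hC₀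
  have hdiff : DifferentiableOn ℝ h (Ico 0 T) := fun t ht =>
    (hasDerivAt_sqrt_neg_mul (hMd t) (hNd t)
      (mul_neg_of_pos_of_neg (hMN t ht).1 (hMN t ht).2)).differentiableAt.differentiableWithinAt
  intro t ht
  have hsubT : Ioo 0 t ⊆ Ico 0 T := fun s hs => ⟨hs.1.le, hs.2.trans ht.2⟩
  have habove : √2 * C₀ < h t := by
    refine lt_of_deriv_nonneg_of_lt ht.1 (hM.continuous.mul hN.continuous).neg.sqrt.continuousOn
      (hdiff.mono hsubT) (fun s hs hsa => ?_) h0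
    nlinarith [hriccati s (hsubT hs) hsa.le]
  exact ⟨hriccati t ht habove.le, by nlinarith⟩

theorem stmt_15 (T C₀ : ℝ) (hT : 0 < T) (hC₀ : 0 ≤ C₀) (M N : ℝ → ℝ)
    (hM : ContDiff ℝ 1 M) (hN : ContDiff ℝ 1 N)
    (hMN : ∀ t ∈ Set.Ico (0 : ℝ) T, M t > 0 ∧ N t < 0)
    (hM' : ∀ t ∈ Set.Ico (0 : ℝ) T, deriv M t ≥ -(1 / 2) * M t * N t - C₀ ^ 2)
    (hN' : ∀ t ∈ Set.Ico (0 : ℝ) T, deriv N t ≤ (1 / 2) * M t * N t + C₀ ^ 2)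
    (h0 : Real.sqrt (-(M 0 * N 0)) > Real.sqrt 2 * C₀) :
    ∀ t ∈ Set.Ico (0 : ℝ) T,
      deriv (fun s => Real.sqrt (-(M s * N s))) t ≥
        (1 / 2) * (Real.sqrt (-(M t * N t)) - Real.sqrt 2 * C₀) *
          (Real.sqrt (-(M t * N t)) + Real.sqrt 2 * C₀) ∧
      (1 / 2) * (Real.sqrt (-(M t * N t)) - Real.sqrt 2 * C₀) *
          (Real.sqrt (-(M t * N t)) + Real.sqrt 2 * C₀) ≥
        (1 / 2) * (Real.sqrt (-(M t * N t)) - Real.sqrt 2 * C₀) ^ 2 :=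
  stmt_15_general T C₀ hC₀ M N hM hN hMN hM' hN' h0
end
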